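/- (Characteristic formulae for inquisitive states) Let P be a finite set of atomic propositions. For every inquisitive modal model M over P, every nonempty downward-closed family Π of information states of M, and every n ∈ ℕ, there exists an InqML formula χ^n_{M,Π} of modal depth at most n such that for every state-pointed inquisitive modal model M',s' over P: M',s' ⊨ χ^n_{M,Π} if and only if M',s' ~^n M,s for some s ∈ Π. -/

import Mathlib

/-!
Over finitely many atoms, `n`-bisimilarity of worlds is equality of `n`-types: the `0`-type of a
world is its set of true atoms, and its `(n+1)`-type adds the family `{τₙ[t] | t ∈ Σ(w)}`, where
`τₙ[t]` is the set of `n`-types of the worlds in `t`; two states are `n`-bisimilar iff they realise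
the same set of `n`-types. There are finitely many `n`-types, and by induction each has a
characteristic formula of depth `n`, supported exactly by the states all of whose worlds have that
type. The classical disjunction of the formulas of a set `T` of types is supported exactly by the
states `t` with `τₙ[t] ⊆ T`, so for a downward closed family `𝒯` of type sets the inquisitive
disjunction over `T ∈ 𝒯` expresses `τₙ[t] ∈ 𝒯`. With `𝒯 = {τₙ[s] | s ∈ Π}` this is the
characteristic formula of `Π`; under `⊞` it bounds `Σ(w)` from above, and, writing `χ_b` for the
formula of type `b`, the formulas `¬⊞ ⩾_{a ∈ T} ⩒_{b ≠ a} χ_b` bound it from below.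
-/

/-- Formulas of inquisitive modal logic InqML over atomic propositions `P`. -/
inductive InqForm (P : Type) : Type
  | atom : P → InqForm P
  | bot : InqForm P
  | and : InqForm P → InqForm P → InqForm P
  | impl : InqForm P → InqForm P → InqForm P
  | idisj : InqForm P → InqForm P → InqForm P
  | box : InqForm P → InqForm P
  | boxplus : InqForm P → InqForm P

/-- An inquisitive modal model `M = ⟨W, Σ, V⟩`. -/
structure InqModel (P : Type) where
  W : Type
  Sig : W → Set (Set W)
  Sig_nonempty : ∀ w, (Sig w).Nonempty
  Sig_downward : ∀ w, ∀ s ∈ Sig w, ∀ t ⊆ s, t ∈ Sig w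
  V : P → Set W

/-- `σ(w) = ⋃ Σ(w)`. -/
def InqModel.sigma {P : Type} (M : InqModel P) (w : M.W) : Set M.W :=
  ⋃₀ M.Sig w

/-- Support of a formula at an information state `s ⊆ W`. -/
def support {P : Type} (M : InqModel P) : InqForm P → Set M.W → Prop
  | .atom p, s => s ⊆ M.V p
  | .bot, s => s = ∅
  | .and φ ψ, s => support M φ s ∧ support M ψ s
  | .impl φ ψ, s => ∀ t ⊆ s, support M φ t → support M ψ t
  | .idisj φ ψ, s => support M φ s ∨ support M ψ s
  | .box φ, s => ∀ w ∈ s, support M φ (M.sigma w)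
  | .boxplus φ, s => ∀ w ∈ s, ∀ t ∈ M.Sig w, support M φ t

/-- Truth at a world: `M,w ⊨ φ` iff `M,{w} ⊨ φ`. -/
def truth {P : Type} (M : InqModel P) (w : M.W) (φ : InqForm P) : Prop :=
  support M φ {w}

/-- Modal depth: maximal nesting depth of `□` and `⊞`. -/
def mdepth {P : Type} : InqForm P → ℕ
  | .atom _ => 0
  | .bot => 0
  | .and φ ψ => max (mdepth φ) (mdepth ψ)
  | .impl φ ψ => max (mdepth φ) (mdepth ψ)
  | .idisj φ ψ => max (mdepth φ) (mdepth ψ)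
  | .box φ => mdepth φ + 1
  | .boxplus φ => mdepth φ + 1

/-- Lift of a relation between worlds to sets of worlds: every world on either
side is related to some world on the other side. -/
def StateRel {W W' : Type} (Z : W → W' → Prop) (s : Set W) (s' : Set W') : Prop :=
  (∀ w ∈ s, ∃ w' ∈ s', Z w w') ∧ (∀ w' ∈ s', ∃ w ∈ s, Z w w')

/-- `n`-bisimilarity between worlds of two inquisitive modal models. -/
def NBisimW {P : Type} (M M' : InqModel P) : ℕ → M.W → M'.W → Prop
  | 0, w, w' => ∀ p : P, w ∈ M.V p ↔ w' ∈ M'.V p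
  | n + 1, w, w' => (∀ p : P, w ∈ M.V p ↔ w' ∈ M'.V p) ∧
      (∀ s ∈ M.Sig w, ∃ s' ∈ M'.Sig w', StateRel (NBisimW M M' n) s s') ∧
      (∀ s' ∈ M'.Sig w', ∃ s ∈ M.Sig w, StateRel (NBisimW M M' n) s s')

/-- `n`-bisimilarity between information states. -/
def NBisimS {P : Type} (M M' : InqModel P) (n : ℕ) (s : Set M.W) (s' : Set M'.W) : Prop :=
  StateRel (NBisimW M M' n) s s'

/-- `Z` is a bisimulation between two inquisitive modal models. -/
def IsBisimulation {P : Type} (M M' : InqModel P) (Z : M.W → M'.W → Prop) : Prop :=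
  ∀ w w', Z w w' →
    (∀ p : P, w ∈ M.V p ↔ w' ∈ M'.V p) ∧
    (∀ s ∈ M.Sig w, ∃ s' ∈ M'.Sig w', StateRel Z s s') ∧
    (∀ s' ∈ M'.Sig w', ∃ s ∈ M.Sig w, StateRel Z s s')

/-- Bisimilarity of worlds: inclusion in some bisimulation. -/
def BisimW {P : Type} (M M' : InqModel P) (w : M.W) (w' : M'.W) : Prop :=
  ∃ Z, IsBisimulation M M' Z ∧ Z w w'

/-- Bisimilarity of information states. -/
def BisimS {P : Type} (M M' : InqModel P) (s : Set M.W) (s' : Set M'.W) : Prop :=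
  StateRel (BisimW M M') s s'

open InqForm

section

variable {P : Type}

namespace InqForm

def neg (φ : InqForm P) : InqForm P := impl φ bot

noncomputable def iConj {ι : Type} [Finite ι] (S : Set ι) (f : ι → InqForm P) : InqForm P :=
  ((Set.toFinite S).toFinset.toList.map f).foldr .and (neg bot)

noncomputable def iIdisj {ι : Type} [Finite ι] (S : Set ι) (f : ι → InqForm P) : InqForm P :=
  ((Set.toFinite S).toFinset.toList.map f).foldr .idisj bot

noncomputable def classicalDisj {ι : Type} [Finite ι] (f : ι → InqForm P) (S : Set ι) :
    InqForm P :=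
  neg (iConj S fun i => neg (f i))

end InqForm

section Support

variable {M : InqModel P}

theorem support_of_subset {φ : InqForm P} {s t : Set M.W} (h : support M φ s) (hts : t ⊆ s) :
    support M φ t := by
  induction φ generalizing s t with
  | atom p => exact hts.trans h
  | bot => exact Set.subset_eq_empty hts h
  | and φ ψ ihφ ihψ => exact ⟨ihφ h.1 hts, ihψ h.2 hts⟩
  | impl φ ψ _ _ => exact fun u hu => h u (hu.trans hts)
  | idisj φ ψ ihφ ihψ => exact h.imp (ihφ · hts) (ihψ · hts)
  | box φ _ => exact fun w hw => h w (hts hw)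
  | boxplus φ _ => exact fun w hw => h w (hts hw)

theorem support_and {φ ψ : InqForm P} {s : Set M.W} :
    support M (φ.and ψ) s ↔ support M φ s ∧ support M ψ s :=
  Iff.rfl

theorem truth_atom {w : M.W} {p : P} : truth M w (atom p) ↔ w ∈ M.V p :=
  Set.singleton_subset_iff

theorem truth_boxplus {w : M.W} {φ : InqForm P} :
    truth M w (boxplus φ) ↔ ∀ t ∈ M.Sig w, support M φ t := by
  simp [truth, support]

theorem support_neg {φ : InqForm P} {s : Set M.W} :
    support M φ.neg s ↔ ∀ w ∈ s, ¬ truth M w φ := by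
  refine ⟨fun h w hw hφ => Set.singleton_ne_empty w (h {w} (by simpa) hφ),
    fun h t hts hφ => ?_⟩
  by_contra hne
  obtain ⟨w, hw⟩ := Set.nonempty_iff_ne_empty.2 hne
  exact h w (hts hw) (support_of_subset hφ (Set.singleton_subset_iff.2 hw))

variable {ι : Type} [Finite ι]

theorem support_iConj {S : Set ι} {f : ι → InqForm P} {s : Set M.W} :
    support M (iConj S f) s ↔ ∀ i ∈ S, support M (f i) s := by
  suffices ∀ l : List ι,
      support M ((l.map f).foldr .and (neg bot)) s ↔ ∀ i ∈ l, support M (f i) s by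
    simp [iConj, this]
  intro l
  induction l with
  | nil => simp [neg, support]
  | cons i l ih => simp [← ih, support]

theorem support_iIdisj {S : Set ι} {f : ι → InqForm P} {s : Set M.W} :
    support M (iIdisj S f) s ↔ s = ∅ ∨ ∃ i ∈ S, support M (f i) s := by
  suffices ∀ l : List ι,
      support M ((l.map f).foldr .idisj bot) s ↔ s = ∅ ∨ ∃ i ∈ l, support M (f i) s by
    simp [iIdisj, this]
  intro l
  induction l with
  | nil => simp [support]
  | cons i l ih =>
    simp only [List.map_cons, List.foldr_cons, support, ih, List.mem_cons, exists_eq_or_imp]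
    tauto

theorem support_classicalDisj {S : Set ι} {f : ι → InqForm P} {s : Set M.W} :
    support M (classicalDisj f S) s ↔ ∀ w ∈ s, ∃ i ∈ S, truth M w (f i) := by
  simp only [classicalDisj, support_neg, truth, support_iConj, Set.mem_singleton_iff, forall_eq]
  simp

end Support

section Depth

@[simp] theorem mdepth_neg (φ : InqForm P) : mdepth φ.neg = mdepth φ := by
  simp [neg, mdepth]

variable {ι : Type} [Finite ι] {S : Set ι} {f : ι → InqForm P} {n : ℕ}

theorem mdepth_iConj_le (hf : ∀ i, mdepth (f i) ≤ n) : mdepth (iConj S f) ≤ n := by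
  suffices ∀ l : List ι, mdepth ((l.map f).foldr .and (neg bot)) ≤ n from this _
  intro l
  induction l with
  | nil => simp [mdepth]
  | cons i l ih => exact max_le (hf i) ih

theorem mdepth_iIdisj_le (hf : ∀ i, mdepth (f i) ≤ n) : mdepth (iIdisj S f) ≤ n := by
  suffices ∀ l : List ι, mdepth ((l.map f).foldr .idisj bot) ≤ n from this _
  intro l
  induction l with
  | nil => simp [mdepth]
  | cons i l ih => exact max_le (hf i) ih

theorem mdepth_classicalDisj_le (hf : ∀ i, mdepth (f i) ≤ n) :
    mdepth (classicalDisj f S) ≤ n := by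
  simpa [classicalDisj] using mdepth_iConj_le (S := S) fun i => (mdepth_neg (f i)).trans_le (hf i)

end Depth

theorem stateRel_eq_image_eq {W W' α : Type} (g : W → α) (g' : W' → α) :
    StateRel (fun w w' => g w = g' w') = fun s s' => g '' s = g' '' s' := by
  funext s s'
  refine propext ⟨fun ⟨h, h'⟩ => Set.Subset.antisymm ?_ ?_,
    fun h => ⟨fun w hw => ?_, fun w' hw' => ?_⟩⟩
  · rintro _ ⟨w, hw, rfl⟩
    obtain ⟨w', hw', e⟩ := h w hw
    exact ⟨w', hw', e.symm⟩
  · rintro _ ⟨w', hw', rfl⟩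
    obtain ⟨w, hw, e⟩ := h' w' hw'
    exact ⟨w, hw, e⟩
  · obtain ⟨w', hw', e⟩ : g w ∈ g' '' s' := h ▸ Set.mem_image_of_mem g hw
    exact ⟨w', hw', e.symm⟩
  · obtain ⟨w, hw, e⟩ : g' w' ∈ g '' s := h ▸ Set.mem_image_of_mem g' hw'
    exact ⟨w, hw, e⟩

@[reducible] def InqType (P : Type) : ℕ → Type
  | 0 => Set P
  | n + 1 => Set P × Set (Set (InqType P n))

instance InqType.finite (P : Type) [Finite P] : ∀ n, Finite (InqType P n)
  | 0 => inferInstanceAs (Finite (Set P))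
  | n + 1 =>
    haveI := InqType.finite P n
    inferInstanceAs (Finite (Set P × Set (Set (InqType P n))))

namespace InqModel

variable (M : InqModel P)

def atoms (w : M.W) : Set P := {p | w ∈ M.V p}

def worldType : (n : ℕ) → M.W → InqType P n
  | 0, w => M.atoms w
  | n + 1, w => ((M.atoms w, (worldType n '' ·) '' M.Sig w) :
      Set P × Set (Set (InqType P n)))

theorem worldType_succ_eq_iff {n : ℕ} {w : M.W} {τ : InqType P (n + 1)} :
    M.worldType (n + 1) w = τ ↔
      M.atoms w = τ.1 ∧ (M.worldType n '' ·) '' M.Sig w = τ.2 :=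
  Prod.ext_iff

theorem isLowerSet_sig (w : M.W) : IsLowerSet (M.Sig w) :=
  fun _ _ hts hs => M.Sig_downward w _ hs _ hts

theorem empty_mem_sig (w : M.W) : ∅ ∈ M.Sig w :=
  let ⟨s, hs⟩ := M.Sig_nonempty w
  M.Sig_downward w s hs ∅ (Set.empty_subset s)

end InqModel

theorem atoms_eq_iff {M M' : InqModel P} {w : M.W} {w' : M'.W} :
    M.atoms w = M'.atoms w' ↔ ∀ p, w ∈ M.V p ↔ w' ∈ M'.V p :=
  Set.ext_iff

theorem nbisimW_eq_worldType_eq (M M' : InqModel P) :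
    ∀ n, NBisimW M M' n = fun w w' => M.worldType n w = M'.worldType n w'
  | 0 => funext₂ fun _ _ => propext atoms_eq_iff.symm
  | n + 1 => funext₂ fun w w' => propext <| by
    change _ ∧ StateRel (StateRel (NBisimW M M' n)) (M.Sig w) (M'.Sig w') ↔ _
    rw [nbisimW_eq_worldType_eq M M' n, stateRel_eq_image_eq, stateRel_eq_image_eq,
      M.worldType_succ_eq_iff]
    exact and_congr_left' atoms_eq_iff.symm

theorem nbisimS_iff_image_worldType_eq {M M' : InqModel P} {n : ℕ} {s : Set M.W}
    {s' : Set M'.W} : NBisimS M M' n s s' ↔ M.worldType n '' s = M'.worldType n '' s' := by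
  rw [NBisimS, nbisimW_eq_worldType_eq, stateRel_eq_image_eq]

theorem isLowerSet_image_image {α β : Type} {𝒯 : Set (Set α)} (h : IsLowerSet 𝒯)
    (g : α → β) :
    IsLowerSet ((g '' ·) '' 𝒯) := by
  rintro _ X hX ⟨t, ht, rfl⟩
  obtain ⟨t', ht't, rfl⟩ := Set.subset_image_iff.1 hX
  exact ⟨t', h ht't ht, rfl⟩

namespace InqForm

variable {α : Type} [Finite α]

noncomputable def familyForm (φ : α → InqForm P) (𝒯 : Set (Set α)) : InqForm P :=
  iIdisj 𝒯 (classicalDisj φ)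

noncomputable def realizesForm (φ : α → InqForm P) (T : Set α) : InqForm P :=
  neg (boxplus (iIdisj T fun a => classicalDisj φ {a}ᶜ))

end InqForm

section Depth

variable {α : Type} [Finite α] {φ : α → InqForm P} {n : ℕ}

theorem mdepth_familyForm_le {𝒯 : Set (Set α)} (hφ : ∀ a, mdepth (φ a) ≤ n) :
    mdepth (familyForm φ 𝒯) ≤ n :=
  mdepth_iIdisj_le fun _ => mdepth_classicalDisj_le hφ

theorem mdepth_realizesForm_le {T : Set α} (hφ : ∀ a, mdepth (φ a) ≤ n) :
    mdepth (realizesForm φ T) ≤ n + 1 := by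
  rw [realizesForm, mdepth_neg]
  exact Nat.succ_le_succ (mdepth_iIdisj_le fun _ => mdepth_classicalDisj_le hφ)

end Depth

section Characterisation

variable {α : Type} [Finite α] {M : InqModel P} {φ : α → InqForm P} {g : M.W → α}

theorem support_classicalDisj_iff_image_subset (hφ : ∀ a w, truth M w (φ a) ↔ g w = a)
    {T : Set α} {s : Set M.W} :
    support M (classicalDisj φ T) s ↔ g '' s ⊆ T := by
  simp [support_classicalDisj, hφ, Set.subset_def]

theorem support_familyForm (hφ : ∀ a w, truth M w (φ a) ↔ g w = a)
    {𝒯 : Set (Set α)} (h𝒯 : IsLowerSet 𝒯) (hne : 𝒯.Nonempty)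
    {s : Set M.W} : support M (familyForm φ 𝒯) s ↔ g '' s ∈ 𝒯 := by
  rw [familyForm, support_iIdisj]
  simp only [support_classicalDisj_iff_image_subset hφ]
  refine ⟨?_, fun h => Or.inr ⟨_, h, subset_rfl⟩⟩
  rintro (rfl | ⟨T, hT, hsT⟩)
  · obtain ⟨T, hT⟩ := hne
    exact Set.image_empty g ▸ h𝒯 (Set.empty_subset T) hT
  · exact h𝒯 hsT hT

theorem support_realizesForm (hφ : ∀ a w, truth M w (φ a) ↔ g w = a)
    {T : Set α} (hT : T.Nonempty) {s : Set M.W} :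
    support M (realizesForm φ T) s ↔ ∀ w ∈ s, ∃ t ∈ M.Sig w, T ⊆ g '' t := by
  simp only [realizesForm, support_neg, truth_boxplus, support_iIdisj,
    support_classicalDisj_iff_image_subset hφ, Set.subset_compl_singleton_iff]
  refine forall₂_congr fun w _ => ?_
  push Not
  exact exists_congr fun t => and_congr_right fun _ =>
    ⟨fun h => h.2, fun h => ⟨(hT.mono h).of_image, h⟩⟩

theorem support_boxplus_familyForm (hφ : ∀ a w, truth M w (φ a) ↔ g w = a)
    {S : Set (Set α)} (hS : IsLowerSet S) (hne : S.Nonempty)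
    {s : Set M.W} :
    support M (boxplus (familyForm φ S)) s ↔ ∀ w ∈ s, (g '' ·) '' M.Sig w ⊆ S := by
  simp only [support, support_familyForm hφ hS hne, Set.subset_def, Set.forall_mem_image]

theorem support_iConj_realizesForm (hφ : ∀ a w, truth M w (φ a) ↔ g w = a)
    {S : Set (Set α)} {s : Set M.W} :
    support M (iConj (S \ {∅}) (realizesForm φ)) s ↔
      ∀ w ∈ s, S ⊆ (g '' ·) '' M.Sig w := by
  rw [support_iConj]
  refine ⟨fun h w hw T hT => ?_, fun h T hT => ?_⟩
  · rcases Set.eq_empty_or_nonempty T with rfl | hne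
    · exact ⟨∅, M.empty_mem_sig w, Set.image_empty g⟩
    · obtain ⟨t, ht, hTt⟩ := (support_realizesForm hφ hne).1 (h T ⟨hT, hne.ne_empty⟩) w hw
      exact isLowerSet_image_image (M.isLowerSet_sig w) g hTt ⟨t, ht, rfl⟩
  · rw [support_realizesForm hφ (Set.nonempty_iff_ne_empty.2 hT.2)]
    intro w hw
    obtain ⟨t, ht, hT⟩ := h w hw hT.1
    exact ⟨t, ht, hT.ge⟩

end Characterisation

section TypeForm

variable [Finite P]

noncomputable def InqForm.atomsForm (A : Set P) : InqForm P :=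
  (iConj A atom).and (iConj Aᶜ fun p => neg (atom p))

theorem support_atomsForm {M : InqModel P} {A : Set P} {s : Set M.W} :
    support M (atomsForm A) s ↔ ∀ w ∈ s, M.atoms w = A := by
  simp only [atomsForm, support, support_iConj, support_neg, truth_atom]
  refine ⟨fun ⟨hA, hAc⟩ w hw => Set.ext fun p => ⟨fun hp => ?_, fun hp => hA p hp hw⟩,
    fun h => ⟨fun p hp w hw => ?_, fun p hp w hw hwp => hp ?_⟩⟩
  · by_contra hpA
    exact hAc p hpA w hw hp
  · rw [← h w hw] at hp
    exact hp
  · rw [← h w hw]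
    exact hwp

theorem mdepth_atomsForm (A : Set P) : mdepth (atomsForm A) = 0 :=
  Nat.eq_zero_of_le_zero <| max_le (mdepth_iConj_le fun _ => le_rfl)
    (mdepth_iConj_le fun _ => le_rfl)

open Classical in
/-- Types whose second component is not a nonempty lower set are realised by no world: `⊥`. -/
noncomputable def InqForm.typeForm : (n : ℕ) → InqType P n → InqForm P
  | 0, A => atomsForm A
  | n + 1, (A, S) =>
    if S.Nonempty ∧ IsLowerSet S then
      (atomsForm A).and ((familyForm (typeForm n) S).boxplus.and
        (iConj (S \ {∅}) (realizesForm (typeForm n))))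
    else bot

theorem mdepth_typeForm_le : ∀ (n : ℕ) (τ : InqType P n), mdepth (typeForm n τ) ≤ n
  | 0, A => (mdepth_atomsForm A).le
  | n + 1, (A, S) => by
    have h := mdepth_typeForm_le n
    rw [typeForm]
    split
    · exact max_le ((mdepth_atomsForm A).trans_le (Nat.zero_le _)) <| max_le
        (Nat.succ_le_succ (mdepth_familyForm_le h))
        (mdepth_iConj_le fun _ => mdepth_realizesForm_le h)
    · exact Nat.zero_le _

theorem support_typeForm {M : InqModel P} :
    ∀ (n : ℕ) (τ : InqType P n) {s : Set M.W},
      support M (typeForm n τ) s ↔ ∀ w ∈ s, M.worldType n w = τ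
  | 0, A, _ => support_atomsForm
  | n + 1, (A, S), s => by
    have hφ (τ : InqType P n) (w : M.W) : truth M w (typeForm n τ) ↔ M.worldType n w = τ :=
      (support_typeForm n τ).trans (by simp)
    by_cases hS : S.Nonempty ∧ IsLowerSet S
    · rw [typeForm, if_pos hS]
      simp only [support_and, support_atomsForm, support_boxplus_familyForm hφ hS.2 hS.1,
        support_iConj_realizesForm hφ, M.worldType_succ_eq_iff, Set.Subset.antisymm_iff,
        ← forall₂_and]
    · rw [typeForm, if_neg hS]
      refine ⟨fun (h : s = ∅) => h ▸ fun w hw => absurd hw (Set.notMem_empty w),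
        fun h => Set.eq_empty_of_forall_notMem fun w hw => hS ?_⟩
      obtain ⟨-, hw : _ = S⟩ := M.worldType_succ_eq_iff.1 (h w hw)
      exact hw ▸ ⟨(M.Sig_nonempty w).image _, isLowerSet_image_image (M.isLowerSet_sig w) _⟩

end TypeForm

end

/-- **Characteristic formulae for inquisitive states**: over a finite set of
atomic propositions, for every nonempty downward-closed family `Π` of
information states of `M` there is a formula of modal depth at most `n`
supported by exactly those state-pointed models `n`-bisimilar to some `s ∈ Π`. -/
theorem characteristic_formula_inqstate {P : Type} [Finite P]
    (M : InqModel P) (Pi : Set (Set M.W)) (hne : Pi.Nonempty)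
    (hdc : ∀ s ∈ Pi, ∀ t ⊆ s, t ∈ Pi) (n : ℕ) :
    ∃ χ : InqForm P, mdepth χ ≤ n ∧
      ∀ (M' : InqModel P) (s' : Set M'.W),
        support M' χ s' ↔ ∃ s ∈ Pi, NBisimS M' M n s' s := by
  have hPi : IsLowerSet Pi := fun s t hts hs => hdc s hs t hts
  refine ⟨familyForm (typeForm n) ((M.worldType n '' ·) '' Pi),
    mdepth_familyForm_le (mdepth_typeForm_le n), fun M' s' => ?_⟩
  have hφ (τ : InqType P n) (w : M'.W) : truth M' w (typeForm n τ) ↔ M'.worldType n w = τ :=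
    support_typeForm n τ |>.trans (by simp)
  rw [support_familyForm hφ (isLowerSet_image_image hPi _) (hne.image _)]
  simp only [nbisimS_iff_image_worldType_eq, Set.mem_image, eq_comm]
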